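/- arXiv:2409.01097 — 5 statements merged into one kernel-verified Lean document; each statement's English description precedes it below -/
import Mathlib

section
/- On X = ℝ with g = h = |·|, for x ≠ 0 and p = x/|x| ∈ ∂g(x), the function λ ↦ (g □ h)(λ x) = |λ||x| tends to +∞ as λ → ∞, while the function λ ↦ (D_g^p(·, x) □ h)(λ x) satisfies D_g^p(λ x, x) = 0 for all λ ≥ 0 and hence (D_g^p(·,x) □ h)(λx) → 0 as λ → ∞. In particular, coercivity of an infimal convolution is not preserved when one functional is replaced by its Bregman distance. -/
/-!
By the triangle inequality `|s| + |t - s| ≥ |t|`, with equality at `s = 0`, so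
`|·| □ |·| = |·|` grows without bound along `λx`. A subgradient `p` of `|·|` at `x` means
`|p| ≤ 1` and `p x = |x|`; the first makes the Bregman distance `|t| - |x| - p (t - x)`
nonnegative, the second makes it vanish on the ray `λx`, `λ ≥ 0`. Choosing `s = λx` in the
infimum then gives `(D □ |·|)(λx) = 0` for all `λ ≥ 0`.
-/

open Filter

noncomputable section

/-- Infimal convolution of real-valued functions on `ℝ`. -/
def infConvR (f h : ℝ → ℝ) (t : ℝ) : ℝ := ⨅ s : ℝ, f s + h (t - s)

theorem infConvR_eq_of_forall_le {f h : ℝ → ℝ} {t c : ℝ} (s₀ : ℝ)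
    (hs₀ : f s₀ + h (t - s₀) = c) (hle : ∀ s, c ≤ f s + h (t - s)) :
    infConvR f h t = c :=
  le_antisymm (hs₀ ▸ ciInf_le ⟨c, Set.forall_mem_range.mpr hle⟩ s₀) (le_ciInf hle)

theorem infConvR_abs_abs (t : ℝ) : infConvR (|·|) (|·|) t = |t| :=
  infConvR_eq_of_forall_le 0 (by simp) fun s => by
    simpa using abs_add_le s (t - s)

theorem div_abs_mul_self {K : Type*} [Field K] [LinearOrder K] [IsStrictOrderedRing K] (x : K) :
    x / |x| * x = |x| := by
  rcases eq_or_ne x 0 with rfl | hx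
  · simp
  · rw [div_mul_eq_mul_div, ← sq, ← sq_abs, sq, mul_self_div_self]

theorem abs_div_abs_self_le_one {K : Type*} [Field K] [LinearOrder K] [IsStrictOrderedRing K]
    (x : K) : |(x / |x|)| ≤ 1 := by
  rw [abs_div, abs_abs]
  exact div_self_le_one |x|

section BregmanAbs

variable {x p : ℝ}

theorem bregman_abs_nonneg (hp : |p| ≤ 1) (hpx : p * x = |x|) (s : ℝ) :
    0 ≤ |s| - |x| - p * (s - x) := by
  have hps : p * s ≤ |s| :=
    calc p * s ≤ |p| * |s| := (le_abs_self _).trans (abs_mul p s).le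
      _ ≤ |s| := mul_le_of_le_one_left (abs_nonneg s) hp
  linarith

theorem bregman_abs_mul_eq_zero (hpx : p * x = |x|) {l : ℝ} (hl : 0 ≤ l) :
    |l * x| - |x| - p * (l * x - x) = 0 := by
  rw [abs_mul, abs_of_nonneg hl, ← hpx]
  ring

theorem infConvR_bregman_abs_mul_eq_zero (hp : |p| ≤ 1) (hpx : p * x = |x|) {l : ℝ}
    (hl : 0 ≤ l) : infConvR (fun t => |t| - |x| - p * (t - x)) (|·|) (l * x) = 0 :=
  infConvR_eq_of_forall_le (l * x)
    (by rw [sub_self, abs_zero, add_zero, bregman_abs_mul_eq_zero hpx hl]) fun s =>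
    add_nonneg (bregman_abs_nonneg hp hpx s) (abs_nonneg _)

end BregmanAbs

/-- On `ℝ` with `g = h = |·|`, `x ≠ 0` and `p = x/|x| ∈ ∂g(x)`:
`(g □ h)(λx) = |λ||x| → ∞` as `λ → ∞`, while `D_g^p(λx, x) = 0` for `λ ≥ 0` and
`(D_g^p(·,x) □ h)(λx) → 0`; so coercivity of an infimal convolution is not preserved
when one functional is replaced by its Bregman distance. -/
theorem bregman_breaks_coercivity (x p : ℝ) (hx : x ≠ 0) (hp : p = x / |x|) :
    (∀ l : ℝ, infConvR (fun t => |t|) (fun t => |t|) (l * x) = |l| * |x|) ∧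
    Tendsto (fun l : ℝ => infConvR (fun t => |t|) (fun t => |t|) (l * x)) atTop atTop ∧
    (∀ l : ℝ, 0 ≤ l → |l * x| - |x| - p * (l * x - x) = 0) ∧
    Tendsto (fun l : ℝ =>
        infConvR (fun t => |t| - |x| - p * (t - x)) (fun t => |t|) (l * x))
      atTop (nhds 0) := by
  have hp₁ : |p| ≤ 1 := hp ▸ abs_div_abs_self_le_one x
  have hpx : p * x = |x| := hp ▸ div_abs_mul_self x
  refine ⟨fun l => by rw [infConvR_abs_abs, abs_mul], ?_,
    fun l hl => bregman_abs_mul_eq_zero hpx hl, ?_⟩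
  · simp_rw [infConvR_abs_abs, abs_mul]
    exact tendsto_abs_atTop_atTop.atTop_mul_const (abs_pos.mpr hx)
  · refine tendsto_const_nhds.congr' ((eventually_ge_atTop 0).mono fun l hl => ?_)
    exact (infConvR_bregman_abs_mul_eq_zero hp₁ hpx hl).symm
end
end

section
/- Let g : X → ℝ ∪ {+∞} be convex with g(u₀) = 0 for some u₀ minimizing g (so g ≥ 0), and h : X → ℝ ∪ {+∞} convex and non-negative. Consider the Nested Bregman iteration producing, for l ≥ 1, pairs (u_l, v_l) with ‖A(u_l+v_l) − f^δ‖ ≤ δ that minimize D_g^{p_{l−1}}(u, u_{l−1}) + h(v) over the constraint set, where p_l ∈ ∂g(u_l) and p_l − p_{l−1} ∈ ∂h(v_l) with p₀ = 0. Then the sequence (h(v_l))_{l∈ℕ} is non-increasing. -/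
open Filter MeasureTheory
open scoped ENNReal

noncomputable section

variable {X Y : Type*} [NormedAddCommGroup X] [InnerProductSpace ℝ X]
  [NormedAddCommGroup Y] [InnerProductSpace ℝ Y]

/-- Convexity for extended-real-valued functions. -/
def EConvexOn (g : X → EReal) : Prop :=
  ∀ u v : X, ∀ a b : ℝ, 0 ≤ a → 0 ≤ b → a + b = 1 →
    g (a • u + b • v) ≤ (a : EReal) * g u + (b : EReal) * g v

/-- Subdifferential of an extended-real-valued function at `x₀`. -/
def ESubdiff (g : X → EReal) (x₀ : X) : Set X :=
  {p : X | ∀ x : X, ((inner ℝ p (x - x₀) : ℝ) : EReal) + g x₀ ≤ g x}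

/-- Infimal convolution of two extended-real-valued functions. -/
def einfConv (g h : X → EReal) (x : X) : EReal :=
  ⨅ u : X, g u + h (x - u)

/-- Bregman distance `D_g^p(a,b) = g(a) - g(b) - ⟨p, a - b⟩` in the extended reals. -/
def ebreg (g : X → EReal) (p : X) (a b : X) : EReal :=
  g a - g b - ((inner ℝ p (a - b) : ℝ) : EReal)

/-- Properness: `g` takes values in `ℝ ∪ {+∞}` and is finite somewhere. -/
def EProper (g : X → EReal) : Prop :=
  (∀ x, g x ≠ ⊥) ∧ ∃ x, g x ≠ ⊤

/-- Coercivity: `g x → ∞` as `‖x‖ → ∞`. -/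
def ECoercive (g : X → EReal) : Prop :=
  ∀ M : ℝ, ∃ R : ℝ, ∀ x : X, R ≤ ‖x‖ → (M : EReal) ≤ g x

/-- Supercoercivity: `g x / ‖x‖ → ∞` as `‖x‖ → ∞`. -/
def ESupercoercive (g : X → EReal) : Prop :=
  ∀ M : ℝ, ∃ R : ℝ, ∀ x : X, R ≤ ‖x‖ → ((M * ‖x‖ : ℝ) : EReal) ≤ g x

/-!
The iterate `(u l, v l)` is admissible for step `l + 1`, so minimality at step `l + 1` gives
`D(u (l+1), u l) + h (v (l+1)) ≤ D(u l, u l) + h (v l)`. Since `p l ∈ ∂g (u l)` and `g (u l)` is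
finite (the subgradient inequality at `u 0` bounds it by `g (u 0) = 0` minus a real number), the
Bregman distance is nonnegative on the left and vanishes on the right.
-/

theorem ne_top_of_mem_ESubdiff {g : X → EReal} {p a b : X} (hp : p ∈ ESubdiff g b)
    (ha : g a ≠ ⊤) : g b ≠ ⊤ := by
  intro hb
  have := hp a
  rw [hb, EReal.coe_add_top, top_le_iff] at this
  exact ha this

theorem ebreg_self {g : X → EReal} (p a : X) (htop : g a ≠ ⊤) (hbot : g a ≠ ⊥) :
    ebreg g p a a = 0 := by
  simp [ebreg, EReal.sub_self htop hbot]

theorem ebreg_nonneg_of_mem_ESubdiff {g : X → EReal} {p b : X} (hp : p ∈ ESubdiff g b)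
    (htop : g b ≠ ⊤) (hbot : g b ≠ ⊥) (a : X) : 0 ≤ ebreg g p a b := by
  lift g b to ℝ using ⟨htop, hbot⟩ with r hr
  have hsub := hp a
  rw [← hr] at hsub
  rw [ebreg, ← hr, EReal.sub_nonneg (Or.inr (EReal.coe_ne_top _)) (Or.inr (EReal.coe_ne_bot _)),
    EReal.le_sub_iff_add_le (Or.inl (EReal.coe_ne_bot _)) (Or.inl (EReal.coe_ne_top _))]
  exact hsub

theorem nested_bregman_h_monotone_general
    (A : X →L[ℝ] Y) (fδ : Y) (δ : ℝ)
    (g h : X → EReal)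
    (hgbot : ∀ x, g x ≠ ⊥)
    (u v p : ℕ → X)
    (hu0 : g (u 0) = 0)
    (hfeas : ∀ l : ℕ, 1 ≤ l → ‖A (u l + v l) - fδ‖ ≤ δ)
    (hmin : ∀ l : ℕ, 1 ≤ l → ∀ u' v' : X, ‖A (u' + v') - fδ‖ ≤ δ →
      ebreg g (p (l - 1)) (u l) (u (l - 1)) + h (v l) ≤
        ebreg g (p (l - 1)) u' (u (l - 1)) + h v')
    (hpg : ∀ l : ℕ, 1 ≤ l → p l ∈ ESubdiff g (u l)) :
    ∀ l : ℕ, 1 ≤ l → h (v (l + 1)) ≤ h (v l) := by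
  intro l hl
  have hfin : g (u l) ≠ ⊤ := ne_top_of_mem_ESubdiff (a := u 0) (hpg l hl) (by simp [hu0])
  have hstep := hmin (l + 1) (by omega) (u l) (v l) (hfeas l hl)
  rw [Nat.add_sub_cancel] at hstep
  calc h (v (l + 1))
      ≤ ebreg g (p l) (u (l + 1)) (u l) + h (v (l + 1)) :=
        le_add_of_nonneg_left (ebreg_nonneg_of_mem_ESubdiff (hpg l hl) hfin (hgbot _) _)
    _ ≤ ebreg g (p l) (u l) (u l) + h (v l) := hstep
    _ = h (v l) := by rw [ebreg_self _ _ hfin (hgbot _), zero_add]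

/-- The Nested Bregman iteration (Morozov variant) produces a
non-increasing sequence `h(v_l)`. -/
theorem nested_bregman_h_monotone
    (A : X →L[ℝ] Y) (fδ : Y) (δ : ℝ) (hδ : 0 ≤ δ)
    (g h : X → EReal)
    (hgc : EConvexOn g) (hhc : EConvexOn h)
    (hgbot : ∀ x, g x ≠ ⊥) (hhbot : ∀ x, h x ≠ ⊥)
    (hgnn : ∀ x, (0 : EReal) ≤ g x) (hhnn : ∀ x, (0 : EReal) ≤ h x)
    (u v p : ℕ → X)
    (hu0 : g (u 0) = 0) (hp0 : p 0 = 0)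
    (hfeas : ∀ l : ℕ, 1 ≤ l → ‖A (u l + v l) - fδ‖ ≤ δ)
    (hmin : ∀ l : ℕ, 1 ≤ l → ∀ u' v' : X, ‖A (u' + v') - fδ‖ ≤ δ →
      ebreg g (p (l - 1)) (u l) (u (l - 1)) + h (v l) ≤
        ebreg g (p (l - 1)) u' (u (l - 1)) + h v')
    (hpg : ∀ l : ℕ, 1 ≤ l → p l ∈ ESubdiff g (u l))
    (hph : ∀ l : ℕ, 1 ≤ l → p l - p (l - 1) ∈ ESubdiff h (v l)) :
    ∀ l : ℕ, 1 ≤ l → h (v (l + 1)) ≤ h (v l) :=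
  nested_bregman_h_monotone_general A fδ δ g h hgbot u v p hu0 hfeas hmin hpg
end
end

section
/- Under the assumptions of the Nested Bregman iteration (Morozov variant), suppose there is a solution x̄ of A x = f with g(x̄) < ∞, ‖f − f^δ‖ ≤ δ, and the subgradients satisfy ⟨p_{l−1} − p_l, v − v_l⟩ ≤ 0 for all v with ‖A(u_l + v) − f^δ‖ ≤ δ. Then for every l ∈ ℕ the estimate h(v_l) ≤ h(0) + g(x̄)/l holds. In particular, if h attains its minimum at 0, then h(v_l) → min h as l → ∞. -/
open Filter MeasureTheory
open scoped ENNReal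

noncomputable section

variable {X Y : Type*} [NormedAddCommGroup X] [InnerProductSpace ℝ X]
  [NormedAddCommGroup Y] [InnerProductSpace ℝ Y]

/-!
With `D n` the Bregman distance `D_g^{p n}(xb, u n) ≥ 0`, the three-point identity, the
variational inequality tested at `w = xb - u (n+1)` and the subgradient inequality of `h` at `0`
give `D (n+1) + h (v (n+1)) ≤ D n + h 0`. Testing the variational inequality at
`w = u n + v n - u (n+1)` and using monotonicity of `∂g` shows that `h (v n)` is nonincreasing,
so telescoping yields `l * (h (v l) - h 0) ≤ D 0 = g xb`.
-/

theorem EReal.tendsto_of_le_of_le_add_div {x : ℕ → EReal} {m : EReal} {C : ℝ}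
    (hlow : ∀ n, m ≤ x n) (hup : ∀ n, 1 ≤ n → x n ≤ m + ((C / n : ℝ) : EReal)) :
    Tendsto x atTop (nhds m) := by
  have hlim : Tendsto (fun n : ℕ => m + ((C / n : ℝ) : EReal)) atTop
      (nhds (m + ((0 : ℝ) : EReal))) := by
    have hcont := EReal.continuousAt_add (p := (m, ((0 : ℝ) : EReal)))
      (Or.inr (EReal.coe_ne_bot 0)) (Or.inr (EReal.coe_ne_top 0))
    exact hcont.tendsto.comp (tendsto_const_nhds.prodMk_nhds
      (EReal.tendsto_coe.mpr (_root_.tendsto_const_div_atTop_nhds_zero_nat C)))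
  rw [EReal.coe_zero, add_zero] at hlim
  exact tendsto_of_tendsto_of_tendsto_of_le_of_le' tendsto_const_nhds hlim
    (Eventually.of_forall hlow) ((eventually_ge_atTop 1).mono hup)

def bregmanDist (G : X → ℝ) (p a b : X) : ℝ :=
  G a - G b - inner ℝ p (a - b)

theorem bregmanDist_three_point (G : X → ℝ) (p q x a b : X) :
    bregmanDist G q x b =
      bregmanDist G p x a - bregmanDist G p b a - inner ℝ (q - p) (x - b) := by
  simp only [bregmanDist, inner_sub_left, inner_sub_right]
  ring

namespace ESubdiff

variable {g : X → EReal} {p q x₀ x y : X}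

theorem ne_top (hp : p ∈ ESubdiff g x₀) (hx : g x ≠ ⊤) : g x₀ ≠ ⊤ := by
  intro htop
  have := hp x
  rw [htop, EReal.coe_add_top] at this
  exact hx (top_le_iff.mp this)

theorem inner_le_toReal_sub (hp : p ∈ ESubdiff g x₀) (hx₀ : g x₀ ≠ ⊥) (hx : g x ≠ ⊤) :
    inner ℝ p (x - x₀) ≤ (g x).toReal - (g x₀).toReal := by
  have h₀ : g x₀ = ((g x₀).toReal : EReal) := (EReal.coe_toReal (ne_top hp hx) hx₀).symm
  have hsub := hp x
  rw [h₀, ← EReal.coe_add] at hsub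
  have hxbot : g x ≠ ⊥ := ne_bot_of_le_ne_bot (EReal.coe_ne_bot _) hsub
  rw [← EReal.coe_toReal hx hxbot, EReal.coe_le_coe_iff] at hsub
  linarith

theorem bregmanDist_nonneg (hp : p ∈ ESubdiff g x₀) (hx₀ : g x₀ ≠ ⊥) (hx : g x ≠ ⊤) :
    0 ≤ bregmanDist (fun y => (g y).toReal) p x x₀ := by
  have := inner_le_toReal_sub hp hx₀ hx
  simp only [bregmanDist]
  linarith

theorem inner_sub_sub_nonneg (hp : p ∈ ESubdiff g x) (hq : q ∈ ESubdiff g y)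
    (hx : g x ≠ ⊥) (hy : g y ≠ ⊥) (hx' : g x ≠ ⊤) (hy' : g y ≠ ⊤) :
    0 ≤ inner ℝ (q - p) (y - x) := by
  have hpy := inner_le_toReal_sub hp hx hy'
  have hqx := inner_le_toReal_sub hq hy hx'
  rw [← neg_sub y x, inner_neg_right] at hqx
  rw [inner_sub_left]
  linarith

end ESubdiff

theorem zero_mem_eSubdiff_of_forall_le {g : X → EReal} {x₀ : X} (hmin : ∀ x, g x₀ ≤ g x) :
    0 ∈ ESubdiff g x₀ := fun x => by
  simpa only [inner_zero_left, EReal.coe_zero, zero_add] using hmin x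

section Step

variable {g h : X → EReal}

theorem bregmanDist_add_toReal_le {p₀ p₁ u₀ u₁ v₁ x : X}
    (hp₀ : p₀ ∈ ESubdiff g u₀) (hq : p₁ - p₀ ∈ ESubdiff h v₁)
    (hu₀ : g u₀ ≠ ⊥) (hu₁ : g u₁ ≠ ⊤) (hv₁ : h v₁ ≠ ⊥) (h0 : h 0 ≠ ⊤)
    (hsub : inner ℝ (p₀ - p₁) (x - u₁ - v₁) ≤ 0) :
    bregmanDist (fun y => (g y).toReal) p₁ x u₁ + (h v₁).toReal ≤
      bregmanDist (fun y => (g y).toReal) p₀ x u₀ + (h 0).toReal := by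
  rw [bregmanDist_three_point _ p₀ p₁ x u₀ u₁]
  have hD := ESubdiff.bregmanDist_nonneg hp₀ hu₀ hu₁
  have hh := ESubdiff.inner_le_toReal_sub hq hv₁ h0
  simp only [inner_sub_left, inner_sub_right, inner_zero_right] at hsub hh ⊢
  linarith

theorem toReal_le_toReal_of_eSubdiff {p₁ p₂ u₁ u₂ v₁ v₂ : X}
    (hp₁ : p₁ ∈ ESubdiff g u₁) (hp₂ : p₂ ∈ ESubdiff g u₂) (hq : p₂ - p₁ ∈ ESubdiff h v₂)
    (hu₁ : g u₁ ≠ ⊥) (hu₂ : g u₂ ≠ ⊥) (hu₁' : g u₁ ≠ ⊤) (hu₂' : g u₂ ≠ ⊤)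
    (hv₁ : h v₁ ≠ ⊤) (hv₂ : h v₂ ≠ ⊥)
    (hsub : inner ℝ (p₁ - p₂) (u₁ + v₁ - u₂ - v₂) ≤ 0) :
    (h v₂).toReal ≤ (h v₁).toReal := by
  have hmono := ESubdiff.inner_sub_sub_nonneg hp₁ hp₂ hu₁ hu₂ hu₁' hu₂'
  have hh := ESubdiff.inner_le_toReal_sub hq hv₂ hv₁
  simp only [inner_sub_left, inner_sub_right, inner_add_right] at hsub hmono hh
  linarith

end Step

theorem le_add_div_of_add_le_of_antitone {b D : ℕ → ℝ} {c : ℝ}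
    (hstep : ∀ n, D (n + 1) + b (n + 1) ≤ D n + c) (hanti : ∀ n, b (n + 2) ≤ b (n + 1))
    (hD : ∀ n, 0 ≤ D (n + 1)) (n : ℕ) :
    b (n + 1) ≤ c + D 0 / (n + 1) := by
  have key : ∀ n : ℕ, (n + 1 : ℝ) * (b (n + 1) - c) ≤ D 0 - D (n + 1) := by
    intro n
    induction n with
    | zero =>
      simp only [Nat.cast_zero, zero_add, one_mul]
      linarith [hstep 0]
    | succ n ih =>
      push_cast
      nlinarith [hstep (n + 1), hanti n]
  rw [← sub_le_iff_le_add', le_div_iff₀ (by positivity), mul_comm]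
  linarith [key n, hD n]

theorem toReal_apply_le_add_div_of_eSubdiff {g h : X → EReal} {u v p : ℕ → X} {xb : X}
    {gxb : ℝ} (S : Set X) (hgbot : ∀ x, g x ≠ ⊥) (hhbot : ∀ x, h x ≠ ⊥) (h0 : h 0 ≠ ⊤)
    (hu0 : g (u 0) = 0) (hp0 : p 0 = 0) (hpg : ∀ n, p n ∈ ESubdiff g (u n))
    (hph : ∀ n, p (n + 1) - p n ∈ ESubdiff h (v (n + 1)))
    (hfeas : ∀ n, u (n + 1) + v (n + 1) ∈ S)
    (hsub : ∀ n w, u (n + 1) + w ∈ S → inner ℝ (p n - p (n + 1)) (w - v (n + 1)) ≤ 0)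
    (hxb : xb ∈ S) (hgxb : g xb = gxb) (n : ℕ) :
    (h (v (n + 1))).toReal ≤ (h 0).toReal + gxb / (n + 1) := by
  have hgxb_ne_top : g xb ≠ ⊤ := hgxb ▸ EReal.coe_ne_top gxb
  have hgu (n : ℕ) : g (u n) ≠ ⊤ := ESubdiff.ne_top (hpg n) hgxb_ne_top
  have hv (n : ℕ) : h (v (n + 1)) ≠ ⊤ := ESubdiff.ne_top (hph n) h0
  have hest := le_add_div_of_add_le_of_antitone (c := (h 0).toReal)
    (b := fun n => (h (v n)).toReal)
    (D := fun n => bregmanDist (fun y => (g y).toReal) (p n) xb (u n))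
    (fun n => bregmanDist_add_toReal_le (hpg n) (hph n) (hgbot _) (hgu _) (hhbot _) h0
      (hsub n _ (by rwa [add_sub_cancel])))
    (fun n => toReal_le_toReal_of_eSubdiff (hpg _) (hpg _) (hph _) (hgbot _) (hgbot _)
      (hgu _) (hgu _) (hv n) (hhbot _) (hsub _ _ (by rw [add_sub_cancel]; exact hfeas n)))
    (fun n => ESubdiff.bregmanDist_nonneg (hpg _) (hgbot _) hgxb_ne_top) n
  simpa [bregmanDist, hp0, hu0, hgxb] using hest

theorem nested_bregman_h_estimate_general
    (A : X →L[ℝ] Y) (f fδ : Y) (δ : ℝ)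
    (g h : X → EReal)
    (hhbot : ∀ x, h x ≠ ⊥)
    (hgnn : ∀ x, (0 : EReal) ≤ g x)
    (u v p : ℕ → X)
    (hu0 : g (u 0) = 0) (hp0 : p 0 = 0)
    (hfeas : ∀ l : ℕ, 1 ≤ l → ‖A (u l + v l) - fδ‖ ≤ δ)
    (hpg : ∀ l : ℕ, 1 ≤ l → p l ∈ ESubdiff g (u l))
    (hph : ∀ l : ℕ, 1 ≤ l → p l - p (l - 1) ∈ ESubdiff h (v l))
    (hsub : ∀ l : ℕ, 1 ≤ l → ∀ w : X, ‖A (u l + w) - fδ‖ ≤ δ →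
      (inner ℝ (p (l - 1) - p l) (w - v l) : ℝ) ≤ 0)
    (xb : X) (hxb : A xb = f) (gxb : ℝ) (hgxb : g xb = (gxb : EReal))
    (hnoise : ‖f - fδ‖ ≤ δ) :
    (∀ l : ℕ, 1 ≤ l → h (v l) ≤ h (0 : X) + ((gxb / l : ℝ) : EReal)) ∧
    ((∀ x : X, h (0 : X) ≤ h x) →
      Tendsto (fun l : ℕ => h (v l)) atTop (nhds (h (0 : X)))) := by
  have hpg' : ∀ n, p n ∈ ESubdiff g (u n)
    | 0 => hp0 ▸ zero_mem_eSubdiff_of_forall_le fun x => hu0 ▸ hgnn x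
    | n + 1 => hpg (n + 1) n.succ_pos
  have bound (l : ℕ) (hl : 1 ≤ l) : h (v l) ≤ h 0 + ((gxb / l : ℝ) : EReal) := by
    rcases eq_or_ne (h 0) ⊤ with h0 | h0
    · rw [h0, EReal.top_add_coe]
      exact le_top
    obtain ⟨n, rfl⟩ := Nat.exists_eq_add_of_le' hl
    have hest := toReal_apply_le_add_div_of_eSubdiff {y | ‖A y - fδ‖ ≤ δ}
      (fun x => ne_bot_of_le_ne_bot EReal.zero_ne_bot (hgnn x)) hhbot h0 hu0 hp0 hpg'
      (fun n => hph (n + 1) n.succ_pos) (fun n => hfeas (n + 1) n.succ_pos)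
      (fun n => hsub (n + 1) n.succ_pos) (show ‖A xb - fδ‖ ≤ δ by rwa [hxb]) hgxb n
    rw [← EReal.coe_toReal (ESubdiff.ne_top (hph _ n.succ_pos) h0) (hhbot _),
      ← EReal.coe_toReal h0 (hhbot 0), ← EReal.coe_add, EReal.coe_le_coe_iff]
    exact_mod_cast hest
  exact ⟨bound, fun hmin0 => EReal.tendsto_of_le_of_le_add_div (fun n => hmin0 (v n)) bound⟩

/-- Under the Nested Bregman (Morozov) assumptions, with an exact
solution `xb` of `Ax = f` with `g(xb) < ∞` and `‖f - fδ‖ ≤ δ`, one has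
`h(v_l) ≤ h(0) + g(xb)/l`; in particular if `h` attains its minimum at `0`
then `h(v_l) → min h`. -/
theorem nested_bregman_h_estimate
    (A : X →L[ℝ] Y) (f fδ : Y) (δ : ℝ) (hδ : 0 ≤ δ)
    (g h : X → EReal)
    (hgc : EConvexOn g) (hhc : EConvexOn h)
    (hgbot : ∀ x, g x ≠ ⊥) (hhbot : ∀ x, h x ≠ ⊥)
    (hgnn : ∀ x, (0 : EReal) ≤ g x) (hhnn : ∀ x, (0 : EReal) ≤ h x)
    (u v p : ℕ → X)
    (hu0 : g (u 0) = 0) (hp0 : p 0 = 0)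
    (hfeas : ∀ l : ℕ, 1 ≤ l → ‖A (u l + v l) - fδ‖ ≤ δ)
    (hmin : ∀ l : ℕ, 1 ≤ l → ∀ u' v' : X, ‖A (u' + v') - fδ‖ ≤ δ →
      ebreg g (p (l - 1)) (u l) (u (l - 1)) + h (v l) ≤
        ebreg g (p (l - 1)) u' (u (l - 1)) + h v')
    (hpg : ∀ l : ℕ, 1 ≤ l → p l ∈ ESubdiff g (u l))
    (hph : ∀ l : ℕ, 1 ≤ l → p l - p (l - 1) ∈ ESubdiff h (v l))
    (hsub : ∀ l : ℕ, 1 ≤ l → ∀ w : X, ‖A (u l + w) - fδ‖ ≤ δ →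
      (inner ℝ (p (l - 1) - p l) (w - v l) : ℝ) ≤ 0)
    (xb : X) (hxb : A xb = f) (gxb : ℝ) (hgxb : g xb = (gxb : EReal))
    (hnoise : ‖f - fδ‖ ≤ δ) :
    (∀ l : ℕ, 1 ≤ l → h (v l) ≤ h (0 : X) + ((gxb / l : ℝ) : EReal)) ∧
    ((∀ x : X, h (0 : X) ≤ h x) →
      Tendsto (fun l : ℕ => h (v l)) atTop (nhds (h (0 : X)))) :=
  nested_bregman_h_estimate_general A f fδ δ g h hhbot hgnn u v p hu0 hp0 hfeas hpg hph hsub xb hxb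
    gxb hgxb hnoise
end
end

section
/- (Coercivity transfer, noise-free case) Let g, h : X → ℝ ∪ {+∞} be proper, convex, lsc, non-negative, with h even (h(−x) = h(x)), and f = A x̄ for some x̄. Suppose p ∈ ∂g(ū) ∩ (ker A)^⊥ for some ū ∈ dom g and p ∈ ∂h(v̄) for some v̄. If ((u_n, v_n)) is a sequence with A(u_n + v_n) = f for all n and g(u_n) + h(v_n) → ∞, then D_g^{p}(u_n, ū) + h(v_n) → ∞. -/
open Filter MeasureTheory
open scoped ENNReal

noncomputable section

variable {X Y : Type*} [NormedAddCommGroup X] [InnerProductSpace ℝ X]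
  [NormedAddCommGroup Y] [InnerProductSpace ℝ Y]

/-!
Since `p ⊥ ker A`, `⟪p, uₙ⟫ = ⟪p, xb⟫ - ⟪p, vₙ⟫`, and the subgradient inequality for `h`
at `vb`, tested at `-vₙ` and combined with evenness, bounds `-⟪p, vₙ⟫` by `h(vₙ) + c` for a
constant `c`. Hence `D_g^p(uₙ, ub) + h(vₙ) ≥ g(uₙ) + c`, while `D_g^p(uₙ, ub) ≥ 0` gives
`D_g^p(uₙ, ub) + h(vₙ) ≥ h(vₙ)`; adding the two, twice `D_g^p(uₙ, ub) + h(vₙ)` dominates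
`g(uₙ) + h(vₙ) + c → ∞`.
-/

theorem EReal.tendsto_top_of_add_coe_le {α : Type*} {l : Filter α} {a b s : α → EReal} (c : ℝ)
    (hab : Tendsto (fun n => a n + b n) l (nhds ⊤)) (ha : ∀ n, a n + c ≤ s n)
    (hb : ∀ n, b n ≤ s n) : Tendsto s l (nhds ⊤) := by
  rw [EReal.tendsto_nhds_top_iff_real] at hab ⊢
  intro M
  filter_upwards [hab (M + M - c)] with n hn
  by_contra! hs
  have hsum : a n + b n + c ≤ M + M :=
    calc a n + b n + c = a n + c + b n := add_right_comm _ _ _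
      _ ≤ s n + s n := add_le_add (ha n) (hb n)
      _ ≤ M + M := add_le_add hs hs
  have hlt := EReal.add_lt_add_right_coe hn c
  rw [← EReal.coe_add, _root_.sub_add_cancel, EReal.coe_add] at hlt
  exact hlt.not_ge hsum

theorem inner_eq_of_mem_orthogonal_ker {E : Type*} [AddCommGroup E] [Module ℝ E]
    {A : X →ₗ[ℝ] E} {p : X} (hp : p ∈ (LinearMap.ker A)ᗮ) {x y : X} (hxy : A x = A y) :
    inner ℝ p x = inner ℝ p y := by
  have hker : x - y ∈ LinearMap.ker A := by rw [LinearMap.mem_ker, map_sub, hxy, sub_self]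
  rw [← sub_eq_zero, ← inner_sub_right, real_inner_comm]
  exact Submodule.inner_right_of_mem_orthogonal hker hp

theorem ne_top_of_mem_eSubdiff {h : X → EReal} {p x₀ : X} (hp : p ∈ ESubdiff h x₀)
    (hdom : ∃ x, h x ≠ ⊤) : h x₀ ≠ ⊤ := by
  obtain ⟨x, hx⟩ := hdom
  intro htop
  have hsub := hp x
  rw [htop, EReal.coe_add_top, top_le_iff] at hsub
  exact hx hsub

theorem neg_inner_add_le_of_mem_eSubdiff_of_even {h : X → EReal} {p x₀ : X}
    (hp : p ∈ ESubdiff h x₀) (heven : ∀ x, h (-x) = h x) (x : X) :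
    ((-inner ℝ p (x + x₀) : ℝ) : EReal) + h x₀ ≤ h x := by
  have hsub := hp (-x)
  rwa [heven, ← neg_add', inner_neg_right] at hsub

theorem ebreg_eq_add_coe {g : X → EReal} {p a b : X} {r : ℝ} (hb : g b = r) :
    ebreg g p a b = g a + ((-(r + inner ℝ p (a - b)) : ℝ) : EReal) := by
  rw [ebreg, hb, sub_eq_add_neg, sub_eq_add_neg, add_assoc, ← EReal.coe_neg, ← EReal.coe_neg,
    ← EReal.coe_add, neg_add]

theorem ebreg_nonneg {g : X → EReal} {p a b : X} {r : ℝ} (hb : g b = r)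
    (hp : p ∈ ESubdiff g b) : 0 ≤ ebreg g p a b := by
  have hsub := hp a
  rw [hb, ← EReal.coe_add] at hsub
  rw [ebreg_eq_add_coe hb, ← EReal.coe_zero, ← add_neg_cancel (r + inner ℝ p (a - b)),
    EReal.coe_add, add_comm r]
  exact add_le_add_left hsub _

theorem add_coe_le_ebreg_add_of_even {g h : X → EReal} {p a b x y : X} {r s : ℝ}
    (hb : g b = r) (hy : h y = s) (hph : p ∈ ESubdiff h y) (heven : ∀ x, h (-x) = h x) :
    g a + ((s - r + inner ℝ p (b - y) - inner ℝ p (a + x) : ℝ) : EReal) ≤ ebreg g p a b + h x :=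
  calc g a + ((s - r + inner ℝ p (b - y) - inner ℝ p (a + x) : ℝ) : EReal)
      = g a + ((-(r + inner ℝ p (a - b)) : ℝ) : EReal)
          + (((-inner ℝ p (x + y) : ℝ) : EReal) + s) := by
        rw [← EReal.coe_add, add_assoc, ← EReal.coe_add]
        congr 2
        simp only [inner_sub_right, inner_add_right]
        ring
    _ ≤ ebreg g p a b + h x := by
        rw [ebreg_eq_add_coe hb]
        exact add_le_add_right (hy ▸ neg_inner_add_le_of_mem_eSubdiff_of_even hph heven x) _

theorem coercivity_transfer_noisefree_general
    (A : X →L[ℝ] Y) (f : Y)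
    (g h : X → EReal) (hgp : EProper g) (hhp : EProper h)
    (hheven : ∀ x : X, h (-x) = h x)
    (xb ub vb p : X) (hf : f = A xb)
    (hub : g ub ≠ ⊤)
    (hpg : p ∈ ESubdiff g ub)
    (hpker : p ∈ Submodule.orthogonal (LinearMap.ker (A : X →ₗ[ℝ] Y)))
    (hph : p ∈ ESubdiff h vb)
    (u v : ℕ → X) (hfeas : ∀ n : ℕ, A (u n + v n) = f)
    (hdiv : Tendsto (fun n : ℕ => g (u n) + h (v n)) atTop (nhds (⊤ : EReal))) :
    Tendsto (fun n : ℕ => ebreg g p (u n) ub + h (v n)) atTop (nhds (⊤ : EReal)) := by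
  have hr := EReal.coe_toReal hub (hgp.1 ub)
  have hs := EReal.coe_toReal (ne_top_of_mem_eSubdiff hph hhp.2) (hhp.1 vb)
  refine EReal.tendsto_top_of_add_coe_le
    ((h vb).toReal - (g ub).toReal + inner ℝ p (ub - vb) - inner ℝ p xb) hdiv (fun n => ?_)
    (fun n => le_add_of_nonneg_left (ebreg_nonneg hr.symm hpg))
  have hp : inner ℝ p (u n + v n) = inner ℝ p xb :=
    inner_eq_of_mem_orthogonal_ker hpker (by simpa [hf] using hfeas n)
  simpa only [hp] using
    add_coe_le_ebreg_add_of_even (a := u n) (x := v n) hr.symm hs.symm hph hheven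

/-- Coercivity transfer, noise-free case: with `h` even,
`f = A xb`, `p ∈ ∂g(ub) ∩ (ker A)ᗮ`, `p ∈ ∂h(vb)`: if `A(u_n + v_n) = f` and
`g(u_n) + h(v_n) → ∞`, then `D_g^p(u_n, ub) + h(v_n) → ∞`. -/
theorem coercivity_transfer_noisefree
    (A : X →L[ℝ] Y) (f : Y)
    (g h : X → EReal) (hgp : EProper g) (hhp : EProper h)
    (hgc : EConvexOn g) (hhc : EConvexOn h)
    (hgl : LowerSemicontinuous g) (hhl : LowerSemicontinuous h)
    (hgnn : ∀ x, (0 : EReal) ≤ g x) (hhnn : ∀ x, (0 : EReal) ≤ h x)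
    (hheven : ∀ x : X, h (-x) = h x)
    (xb ub vb p : X) (hf : f = A xb)
    (hub : g ub ≠ ⊤)
    (hpg : p ∈ ESubdiff g ub)
    (hpker : p ∈ Submodule.orthogonal (LinearMap.ker (A : X →ₗ[ℝ] Y)))
    (hph : p ∈ ESubdiff h vb)
    (u v : ℕ → X) (hfeas : ∀ n : ℕ, A (u n + v n) = f)
    (hdiv : Tendsto (fun n : ℕ => g (u n) + h (v n)) atTop (nhds (⊤ : EReal))) :
    Tendsto (fun n : ℕ => ebreg g p (u n) ub + h (v n)) atTop (nhds (⊤ : EReal)) :=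
  coercivity_transfer_noisefree_general A f g h hgp hhp hheven xb ub vb p hf hub hpg hpker hph u v
    hfeas hdiv
end
end

section
/- If there exists a minimizing sequence (v_n) of h and solutions (x_n) of A x = f with g(x_n − v_n) < ∞ for all n, then the Nested Bregman iterates satisfy lim_{l→∞} h(v_l^δ) = inf h, even if h does not attain its minimum at 0. More precisely, h(v_l^δ) ≤ h(v_n) + g(x_n − v_n)/l for all l, n. -/
/-!
Fix a feasible pair `(y, z)` with `h z < ∞`. The Bregman distances `E k = D_g^{p k}(y, u k)`
decrease by at least `h (v (k+1)) - h z` in each step, start at `E 0 = g y` and stay nonnegative,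
while `h (v l)` is nonincreasing; summing gives `l * (h (v l) - h z) ≤ g y`. Taking
`(y, z) = (xseq n - vseq n, vseq n)` and letting first `l` and then `n` tend to infinity gives the
convergence to `inf h`. (The paper gets the same bound from the case `z = 0` applied to the
shifted functionals `g (· - z)` and `h (· + z)`.)
-/

open Filter MeasureTheory
open scoped ENNReal

noncomputable section

variable {X Y : Type*} [NormedAddCommGroup X] [InnerProductSpace ℝ X]
  [NormedAddCommGroup Y] [InnerProductSpace ℝ Y]

open Topology
open scoped InnerProductSpace

theorem EReal.exists_eq_coe_of_ne_bot_of_ne_top {x : EReal} (hbot : x ≠ ⊥) (htop : x ≠ ⊤) :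
    ∃ r : ℝ, x = r :=
  ⟨x.toReal, (EReal.coe_toReal htop hbot).symm⟩

theorem Antitone.natCast_succ_mul_add_le {c E : ℕ → ℝ} (hc : Antitone c)
    (hE : ∀ k, E (k + 1) + c k ≤ E k) (l : ℕ) : (l + 1) * c l + E (l + 1) ≤ E 0 := by
  induction l with
  | zero => simpa [add_comm] using hE 0
  | succ l ih =>
    have hstep := hE (l + 1)
    have hmono : ((l : ℝ) + 1) * c (l + 1) ≤ (l + 1) * c l :=
      mul_le_mul_of_nonneg_left (hc l.le_succ) (by positivity)
    push_cast
    linarith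

theorem tendsto_of_forall_le_add_div {a b : ℕ → EReal} {c : ℕ → ℝ} {m : EReal}
    (hm : ∀ l, m ≤ a l) (hbot : ∀ n, b n ≠ ⊥) (hb : Tendsto b atTop (𝓝 m))
    (hab : ∀ l, 1 ≤ l → ∀ n, a l ≤ b n + ((c n / l : ℝ) : EReal)) :
    Tendsto a atTop (𝓝 m) := by
  refine tendsto_order.2 ⟨fun x hx => .of_forall fun l => hx.trans_le (hm l), fun x hx => ?_⟩
  obtain ⟨n, hn⟩ := (hb.eventually_lt_const hx).exists
  obtain ⟨β, hβ⟩ := EReal.exists_eq_coe_of_ne_bot_of_ne_top (hbot n) hn.ne_top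
  have hlim : Tendsto (fun l : ℕ => ((β + c n / l : ℝ) : EReal)) atTop (𝓝 β) := by
    rw [EReal.tendsto_coe]
    simpa using tendsto_const_nhds.add (tendsto_const_div_atTop_nhds_zero_nat (c n))
  filter_upwards [hlim.eventually_lt_const (hβ ▸ hn), eventually_ge_atTop 1] with l hlt hl
  calc a l ≤ b n + ((c n / l : ℝ) : EReal) := hab l hl n
    _ = ((β + c n / l : ℝ) : EReal) := by rw [hβ]; norm_cast
    _ < x := hlt

section Subdifferential

variable {g : X → EReal}

theorem inner_add_le_of_mem_ESubdiff {p x y : X} (hp : p ∈ ESubdiff g x) {a b : ℝ}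
    (ha : g x = a) (hb : g y = b) : ⟪p, y - x⟫_ℝ + a ≤ b := by
  have hy := hp y
  rw [ha, hb] at hy
  exact_mod_cast hy

theorem ne_top_of_mem_ESubdiff_s17 {p x : X} (hp : p ∈ ESubdiff g x) {y : X} (hy : g y ≠ ⊤) :
    g x ≠ ⊤ := by
  intro hx
  have hxy := hp y
  rw [hx, EReal.add_top_of_ne_bot (EReal.coe_ne_bot _), top_le_iff] at hxy
  exact hy hxy

theorem zero_mem_ESubdiff_of_nonneg (hg : ∀ x, 0 ≤ g x) {x₀ : X} (hx₀ : g x₀ = 0) :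
    0 ∈ ESubdiff g x₀ := by
  intro x
  simpa [hx₀] using hg x

theorem ebreg_eq_coe {a b : X} {α β : ℝ} (ha : g a = α) (hb : g b = β) (p : X) :
    ebreg g p a b = ((α - β - ⟪p, a - b⟫_ℝ : ℝ) : EReal) := by
  rw [ebreg, ha, hb]
  norm_cast

end Subdifferential

/-- Nested Bregman iteration with the constraint `u + v ∈ K` (in the Morozov variant
`K = {x | ‖A x - f^δ‖ ≤ δ}`): `(u (k+1), v (k+1))` minimizes `D_g^{p k}(·, u k) + h` on the
constraint set, and the new subgradient `p (k+1)` satisfies the optimality conditions. -/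
structure IsNestedBregmanIteration (K : Set X) (g h : X → EReal) (u v p : ℕ → X) : Prop where
  g_init : g (u 0) = 0
  p_init : p 0 = 0
  add_mem : ∀ k, u (k + 1) + v (k + 1) ∈ K
  isMin : ∀ k u' v', u' + v' ∈ K →
    ebreg g (p k) (u (k + 1)) (u k) + h (v (k + 1)) ≤ ebreg g (p k) u' (u k) + h v'
  mem_subdiff_g : ∀ k, p (k + 1) ∈ ESubdiff g (u (k + 1))
  mem_subdiff_h : ∀ k, p (k + 1) - p k ∈ ESubdiff h (v (k + 1))
  inner_nonpos : ∀ k w, u (k + 1) + w ∈ K → ⟪p k - p (k + 1), w - v (k + 1)⟫_ℝ ≤ 0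

namespace IsNestedBregmanIteration

variable {K : Set X} {g h : X → EReal} {u v p : ℕ → X} {G H : ℕ → ℝ}

theorem mem_subdiff (hI : IsNestedBregmanIteration K g h u v p) (hg : ∀ x, 0 ≤ g x) :
    ∀ k, p k ∈ ESubdiff g (u k)
  | 0 => hI.p_init ▸ zero_mem_ESubdiff_of_nonneg hg hI.g_init
  | k + 1 => hI.mem_subdiff_g k

theorem exists_g_eq_coe (hI : IsNestedBregmanIteration K g h u v p) (hg : ∀ x, 0 ≤ g x)
    (hgbot : ∀ x, g x ≠ ⊥) : ∃ G : ℕ → ℝ, ∀ k, g (u k) = G k := by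
  have hfin k : g (u k) ≠ ⊤ :=
    ne_top_of_mem_ESubdiff_s17 (hI.mem_subdiff hg k) (y := u 0) (by simp [hI.g_init])
  exact ⟨fun k => (g (u k)).toReal, fun k => (EReal.coe_toReal (hfin k) (hgbot _)).symm⟩

theorem exists_h_eq_coe (hI : IsNestedBregmanIteration K g h u v p) (hhbot : ∀ x, h x ≠ ⊥)
    {z : X} {η : ℝ} (hη : h z = η) : ∃ H : ℕ → ℝ, ∀ k, h (v (k + 1)) = H k := by
  have hfin k : h (v (k + 1)) ≠ ⊤ :=
    ne_top_of_mem_ESubdiff_s17 (hI.mem_subdiff_h k) (y := z) (by simp [hη])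
  exact ⟨fun k => (h (v (k + 1))).toReal, fun k => (EReal.coe_toReal (hfin k) (hhbot _)).symm⟩

theorem antitone_h (hI : IsNestedBregmanIteration K g h u v p) (hG : ∀ k, g (u k) = G k)
    (hH : ∀ k, h (v (k + 1)) = H k) : Antitone H := by
  refine antitone_nat_of_succ_le fun k => ?_
  have hmin := hI.isMin (k + 1) _ _ (hI.add_mem k)
  rw [ebreg_eq_coe (hG _) (hG _), ebreg_eq_coe (hG _) (hG _), hH, hH] at hmin
  have hmin' : G (k + 2) - G (k + 1) - ⟪p (k + 1), u (k + 2) - u (k + 1)⟫_ℝ + H (k + 1) ≤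
      G (k + 1) - G (k + 1) - ⟪p (k + 1), u (k + 1) - u (k + 1)⟫_ℝ + H k := by
    exact_mod_cast hmin
  have hbreg := inner_add_le_of_mem_ESubdiff (hI.mem_subdiff_g k) (hG _) (hG (k + 2))
  simp only [sub_self, inner_zero_right] at hmin'
  linarith

/-- The right side minus the first summand on the left is
`D_g^{p k}(u (k+1), u k) + ⟪p (k+1) - p k, y - u (k+1)⟫`. The Bregman distance is nonnegative, and
the optimality condition in `v` with `w = y + z - u (k+1)` together with the subgradient inequality
for `h` bound the inner product below by `H k - η`. -/
theorem bregman_descent (hI : IsNestedBregmanIteration K g h u v p) (hg : ∀ x, 0 ≤ g x)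
    (hG : ∀ k, g (u k) = G k) (hH : ∀ k, h (v (k + 1)) = H k) {y z : X} (hK : y + z ∈ K)
    {γ η : ℝ} (hη : h z = η) (k : ℕ) :
    (γ - G (k + 1) - ⟪p (k + 1), y - u (k + 1)⟫_ℝ) + (H k - η) ≤
      γ - G k - ⟪p k, y - u k⟫_ℝ := by
  have hbreg := inner_add_le_of_mem_ESubdiff (hI.mem_subdiff hg k) (hG k) (hG (k + 1))
  have hsub_h := inner_add_le_of_mem_ESubdiff (hI.mem_subdiff_h k) (hH k) hη
  have hopt := hI.inner_nonpos k (y + z - u (k + 1)) (by rwa [add_sub_cancel])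
  simp only [inner_sub_left, inner_sub_right, inner_add_right] at hbreg hsub_h hopt ⊢
  linarith

theorem le_add_div (hI : IsNestedBregmanIteration K g h u v p) (hg : ∀ x, 0 ≤ g x)
    (hgbot : ∀ x, g x ≠ ⊥) (hhbot : ∀ x, h x ≠ ⊥) {y z : X} (hK : y + z ∈ K) {γ : ℝ}
    (hγ : g y = γ) {l : ℕ} (hl : 1 ≤ l) : h (v l) ≤ h z + ((γ / l : ℝ) : EReal) := by
  by_cases htop : h z = ⊤
  · rw [htop, EReal.top_add_of_ne_bot (EReal.coe_ne_bot _)]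
    exact le_top
  obtain ⟨η, hη⟩ := EReal.exists_eq_coe_of_ne_bot_of_ne_top (hhbot z) htop
  obtain ⟨G, hG⟩ := hI.exists_g_eq_coe hg hgbot
  obtain ⟨H, hH⟩ := hI.exists_h_eq_coe hhbot hη
  obtain ⟨k, rfl⟩ : ∃ k, l = k + 1 := ⟨l - 1, by omega⟩
  have hanti : Antitone fun k => H k - η :=
    fun _ _ hij => sub_le_sub_right (hI.antitone_h hG hH hij) η
  have hsum := hanti.natCast_succ_mul_add_le (E := fun k => γ - G k - ⟪p k, y - u k⟫_ℝ)
    (hI.bregman_descent hg hG hH hK hη) k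
  have hG0 : G 0 = 0 := by exact_mod_cast (hG 0).symm.trans hI.g_init
  have hE := inner_add_le_of_mem_ESubdiff (hI.mem_subdiff hg (k + 1)) (hG _) hγ
  simp only [hG0, hI.p_init, inner_zero_left, sub_zero] at hsum
  have hreal : H k ≤ η + γ / ((k + 1 : ℕ) : ℝ) := by
    rw [← sub_le_iff_le_add', le_div_iff₀ (by positivity)]
    push_cast
    linarith
  rw [hH, hη]
  exact_mod_cast hreal

end IsNestedBregmanIteration

theorem nested_bregman_inf_convergence_general
    (A : X →L[ℝ] Y) (f fδ : Y) (δ : ℝ)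
    (g h : X → EReal)
    (hgbot : ∀ x, g x ≠ ⊥) (hhbot : ∀ x, h x ≠ ⊥)
    (hgnn : ∀ x, (0 : EReal) ≤ g x)
    (u v p : ℕ → X)
    (hu0 : g (u 0) = 0) (hp0 : p 0 = 0)
    (hfeas : ∀ l : ℕ, 1 ≤ l → ‖A (u l + v l) - fδ‖ ≤ δ)
    (hmin : ∀ l : ℕ, 1 ≤ l → ∀ u' v' : X, ‖A (u' + v') - fδ‖ ≤ δ →
      ebreg g (p (l - 1)) (u l) (u (l - 1)) + h (v l) ≤
        ebreg g (p (l - 1)) u' (u (l - 1)) + h v')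
    (hpg : ∀ l : ℕ, 1 ≤ l → p l ∈ ESubdiff g (u l))
    (hph : ∀ l : ℕ, 1 ≤ l → p l - p (l - 1) ∈ ESubdiff h (v l))
    (hsub : ∀ l : ℕ, 1 ≤ l → ∀ w : X, ‖A (u l + w) - fδ‖ ≤ δ →
      (inner ℝ (p (l - 1) - p l) (w - v l) : ℝ) ≤ 0)
    (hnoise : ‖f - fδ‖ ≤ δ)
    (vseq xseq : ℕ → X)
    (hxseq : ∀ n : ℕ, A (xseq n) = f)
    (gv : ℕ → ℝ) (hgv : ∀ n : ℕ, g (xseq n - vseq n) = (gv n : EReal))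
    (hminseq : Tendsto (fun n : ℕ => h (vseq n)) atTop (nhds (⨅ x : X, h x))) :
    (∀ l : ℕ, 1 ≤ l → ∀ n : ℕ,
      h (v l) ≤ h (vseq n) + ((gv n / l : ℝ) : EReal)) ∧
    Tendsto (fun l : ℕ => h (v l)) atTop (nhds (⨅ x : X, h x)) := by
  have hI : IsNestedBregmanIteration {x | ‖A x - fδ‖ ≤ δ} g h u v p :=
    { g_init := hu0
      p_init := hp0
      add_mem := fun k => hfeas (k + 1) k.succ_pos
      isMin := fun k => by simpa using hmin (k + 1) k.succ_pos
      mem_subdiff_g := fun k => hpg (k + 1) k.succ_pos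
      mem_subdiff_h := fun k => by simpa using hph (k + 1) k.succ_pos
      inner_nonpos := fun k => by simpa using hsub (k + 1) k.succ_pos }
  have hbound : ∀ l : ℕ, 1 ≤ l → ∀ n : ℕ, h (v l) ≤ h (vseq n) + ((gv n / l : ℝ) : EReal) :=
    fun l hl n => hI.le_add_div hgnn hgbot hhbot (by simpa [hxseq] using hnoise) (hgv n) hl
  exact ⟨hbound, tendsto_of_forall_le_add_div (fun l => iInf_le _ _) (fun n => hhbot _)
    hminseq hbound⟩

/-- if there is a minimizing sequence `(vseq n)` of `h` and
solutions `(xseq n)` of `Ax = f` with `g(xseq n − vseq n) < ∞`, then the Nested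
Bregman iterates satisfy `h(v_l) ≤ h(vseq n) + g(xseq n − vseq n)/l` for all
`l, n`, and hence `h(v_l) → inf h`, even if `h` does not attain its minimum
at `0`. -/
theorem nested_bregman_inf_convergence
    (A : X →L[ℝ] Y) (f fδ : Y) (δ : ℝ) (hδ : 0 ≤ δ)
    (g h : X → EReal)
    (hgc : EConvexOn g) (hhc : EConvexOn h)
    (hgbot : ∀ x, g x ≠ ⊥) (hhbot : ∀ x, h x ≠ ⊥)
    (hgnn : ∀ x, (0 : EReal) ≤ g x) (hhnn : ∀ x, (0 : EReal) ≤ h x)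
    (u v p : ℕ → X)
    (hu0 : g (u 0) = 0) (hp0 : p 0 = 0)
    (hfeas : ∀ l : ℕ, 1 ≤ l → ‖A (u l + v l) - fδ‖ ≤ δ)
    (hmin : ∀ l : ℕ, 1 ≤ l → ∀ u' v' : X, ‖A (u' + v') - fδ‖ ≤ δ →
      ebreg g (p (l - 1)) (u l) (u (l - 1)) + h (v l) ≤
        ebreg g (p (l - 1)) u' (u (l - 1)) + h v')
    (hpg : ∀ l : ℕ, 1 ≤ l → p l ∈ ESubdiff g (u l))
    (hph : ∀ l : ℕ, 1 ≤ l → p l - p (l - 1) ∈ ESubdiff h (v l))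
    (hsub : ∀ l : ℕ, 1 ≤ l → ∀ w : X, ‖A (u l + w) - fδ‖ ≤ δ →
      (inner ℝ (p (l - 1) - p l) (w - v l) : ℝ) ≤ 0)
    (hnoise : ‖f - fδ‖ ≤ δ)
    (vseq xseq : ℕ → X)
    (hxseq : ∀ n : ℕ, A (xseq n) = f)
    (gv : ℕ → ℝ) (hgv : ∀ n : ℕ, g (xseq n - vseq n) = (gv n : EReal))
    (hminseq : Tendsto (fun n : ℕ => h (vseq n)) atTop (nhds (⨅ x : X, h x))) :
    (∀ l : ℕ, 1 ≤ l → ∀ n : ℕ,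
      h (v l) ≤ h (vseq n) + ((gv n / l : ℝ) : EReal)) ∧
    Tendsto (fun l : ℕ => h (v l)) atTop (nhds (⨅ x : X, h x)) :=
  nested_bregman_inf_convergence_general A f fδ δ g h hgbot hhbot hgnn u v p hu0 hp0 hfeas hmin hpg
    hph hsub hnoise vseq xseq hxseq gv hgv hminseq
end
end
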